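/- Property II: For any function f : {1,…,C} → ℝ and φ ∈ ℝ^C, the expected reward E(φ) := E_{z~Cat(σ(φ))}[f(z)] = Σ_{i=1}^C f(i) σ(φ)_i equals E_{π~Dir(1_C)}[f(argmin_i π_i e^{-φ_i})]. -/

import Mathlib

/-! Write `π = ε / ∑ ε` with `ε` iid `Exp(1)`. Rescaling does not move the argmin, and
`ε i * exp (-φ i)` are independent exponentials with rates `exp (φ i)`: an exponential race.
Conditioning on `ε c`, the probability that `c` wins is
`∫ e^{-t} ∏_{j ≠ c} e^{-a_j t} dt = 1 / (1 + ∑_{j ≠ c} a_j)`, `a_j = exp (φ j - φ c)`,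
which is `softmax φ c`. Because `argminF` breaks ties by choice, one works
with the events that `c` is the strict argmin: they are disjoint, their probabilities sum to
one, so they cover almost everything, and on each of them the integrand is constant. -/

open MeasureTheory ProbabilityTheory

/-- Tie-breaking argmin over `Fin C` (the argmin is a.s. unique in all statements below). -/
noncomputable def argminF {C : ℕ} [NeZero C] (v : Fin C → ℝ) : Fin C :=
  (Finset.exists_min_image Finset.univ v Finset.univ_nonempty).choose

/-- The softmax function. -/
noncomputable def softmax {C : ℕ} (φ : Fin C → ℝ) (c : Fin C) : ℝ :=
  Real.exp (φ c) / ∑ i, Real.exp (φ i)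

/-- The symmetric Dirichlet distribution `Dir(1_C)`, realized as normalized iid Exp(1). -/
noncomputable def dirichletOne (C : ℕ) : Measure (Fin C → ℝ) :=
  Measure.map (fun ε i => ε i / ∑ j, ε j) (Measure.pi fun _ => expMeasure 1)

/-- Pseudo action `z^{c⇌j}`: argmin after swapping coordinates `c` and `j` of `π`. -/
noncomputable def zswap {C : ℕ} [NeZero C] (φ π : Fin C → ℝ) (c j : Fin C) : Fin C :=
  argminF (fun i => π (Equiv.swap c j i) * Real.exp (-φ i))

open Function

section StrictArgmin

variable {ι : Type*}

def IsStrictArgmin (v : ι → ℝ) (c : ι) : Prop :=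
  ∀ j, j ≠ c → v c < v j

lemma IsStrictArgmin.eq {v : ι → ℝ} {c c' : ι} (h : IsStrictArgmin v c)
    (h' : IsStrictArgmin v c') : c = c' := by
  by_contra hne
  exact lt_asymm (h c' (Ne.symm hne)) (h' c hne)

lemma argminF_eq_of_isStrictArgmin {C : ℕ} [NeZero C] {v : Fin C → ℝ} {c : Fin C}
    (h : IsStrictArgmin v c) : argminF v = c := by
  by_contra hne
  exact (h _ hne).not_ge <|
    (Finset.exists_min_image Finset.univ v Finset.univ_nonempty).choose_spec.2 c
      (Finset.mem_univ c)

lemma isStrictArgmin_div_mul_iff {x w : ι → ℝ} {s : ℝ} (hs : 0 < s) {c : ι} :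
    IsStrictArgmin (fun i => x i / s * w i) c ↔ IsStrictArgmin (fun i => x i * w i) c := by
  simp only [IsStrictArgmin, div_mul_eq_mul_div, div_lt_div_iff_of_pos_right hs]

lemma pairwise_disjoint_setOf_isStrictArgmin {Ω : Type*} (v : Ω → ι → ℝ) :
    Pairwise (Disjoint on fun c => {x | IsStrictArgmin (v x) c}) :=
  fun _ _ hne => Set.disjoint_left.2 fun _ h h' => hne (h.eq h')

lemma measurableSet_setOf_isStrictArgmin [Countable ι] {Ω : Type*} [MeasurableSpace Ω]
    {v : Ω → ι → ℝ} (hv : ∀ i, Measurable fun x => v x i) (c : ι) :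
    MeasurableSet {x | IsStrictArgmin (v x) c} := by
  simp only [IsStrictArgmin, Set.ofPred_forall]
  exact .iInter fun j => .iInter fun _ => measurableSet_lt (hv c) (hv j)

end StrictArgmin

section Partition

variable {ι Ω : Type*} [Fintype ι] [MeasurableSpace Ω] {ν : Measure Ω} {S : ι → Set Ω}

lemma ae_mem_iUnion_of_sum_measure_eq_one [IsProbabilityMeasure ν]
    (hS : ∀ i, MeasurableSet (S i)) (hdisj : Pairwise (Disjoint on S))
    (hsum : ∑ i, ν (S i) = 1) : ∀ᵐ x ∂ν, x ∈ ⋃ i, S i := by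
  change ν (⋃ i, S i)ᶜ = 0
  rw [prob_compl_eq_one_sub (MeasurableSet.iUnion hS), measure_iUnion hdisj hS, tsum_fintype,
    hsum, tsub_self]

lemma integral_eq_sum_of_eqOn [IsFiniteMeasure ν] {g : Ω → ℝ} {b : ι → ℝ}
    (hS : ∀ i, MeasurableSet (S i)) (hdisj : Pairwise (Disjoint on S))
    (hcover : ∀ᵐ x ∂ν, x ∈ ⋃ i, S i) (hg : ∀ i, Set.EqOn g (fun _ => b i) (S i)) :
    ∫ x, g x ∂ν = ∑ i, ν.real (S i) * b i := by
  have hg_ae : g =ᵐ[ν] fun x => ∑ i, (S i).indicator (fun _ => b i) x := by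
    filter_upwards [hcover] with x hx
    obtain ⟨i, hxi⟩ := Set.mem_iUnion.1 hx
    rw [Finset.sum_eq_single_of_mem i (Finset.mem_univ i)
      fun j _ hji => Set.indicator_of_notMem (Set.disjoint_left.1 (hdisj hji.symm) hxi) _,
      Set.indicator_of_mem hxi, hg i hxi]
  rw [integral_congr_ae hg_ae,
    integral_finsetSum _ fun i _ => (integrable_const (b i)).indicator (hS i)]
  simp only [integral_indicator_const _ (hS _), smul_eq_mul]

end Partition

lemma expMeasure_Iic_zero {r : ℝ} (hr : 0 < r) : expMeasure r (Set.Iic 0) = 0 := by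
  have := isProbabilityMeasure_expMeasure hr
  rw [← ofReal_cdf, cdf_expMeasure_eq hr]
  simp

lemma ae_pos_expMeasure {r : ℝ} (hr : 0 < r) : ∀ᵐ t ∂expMeasure r, 0 < t := by
  rw [ae_iff]
  exact measure_mono_null (fun _ ht => not_lt.1 ht) (expMeasure_Iic_zero hr)

lemma expMeasure_Ioi {r x : ℝ} (hr : 0 < r) (hx : 0 ≤ x) :
    expMeasure r (Set.Ioi x) = ENNReal.ofReal (Real.exp (-(r * x))) := by
  have := isProbabilityMeasure_expMeasure hr
  have hexp : Real.exp (-(r * x)) ≤ 1 := Real.exp_le_one_iff.2 (neg_nonpos.2 (by positivity))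
  rw [← Set.compl_Iic, prob_compl_eq_one_sub measurableSet_Iic, ← ofReal_cdf,
    cdf_expMeasure_eq hr, if_pos hx, ← ENNReal.ofReal_one,
    ← ENNReal.ofReal_sub _ (sub_nonneg.2 hexp), sub_sub_cancel]

lemma lintegral_exp_neg_mul_expMeasure {r b : ℝ} (hr : 0 < r) (hrb : 0 < r + b) :
    ∫⁻ t, ENNReal.ofReal (Real.exp (-(b * t))) ∂expMeasure r
      = ENNReal.ofReal (r / (r + b)) := by
  have hpdf : ∀ r, Measurable (exponentialPDF r) :=
    fun r => (measurable_exponentialPDFReal r).ennreal_ofReal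
  have hdensity : ∀ t, exponentialPDF r t * ENNReal.ofReal (Real.exp (-(b * t)))
      = ENNReal.ofReal (r / (r + b)) * exponentialPDF (r + b) t := by
    intro t
    rcases lt_or_ge t 0 with ht | ht
    · simp [exponentialPDF_of_neg ht]
    rw [exponentialPDF_of_nonneg ht, exponentialPDF_of_nonneg ht,
      ← ENNReal.ofReal_mul (by positivity), ← ENNReal.ofReal_mul (by positivity)]
    congr 1
    rw [mul_assoc, ← Real.exp_add, show -(r * t) + -(b * t) = -((r + b) * t) by ring]
    field_simp
  rw [show expMeasure r = volume.withDensity (exponentialPDF r) from rfl,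
    lintegral_withDensity_eq_lintegral_mul _ (hpdf r) (by fun_prop)]
  simp only [Pi.mul_apply, hdensity]
  rw [lintegral_const_mul _ (hpdf _), lintegral_exponentialPDF_eq_one hrb, mul_one]

instance : IsProbabilityMeasure (expMeasure 1) := isProbabilityMeasure_expMeasure one_pos

lemma ae_forall_pos_pi_expMeasure {ι : Type*} [Fintype ι] :
    ∀ᵐ x ∂Measure.pi (fun _ : ι => expMeasure 1), ∀ i, 0 < x i :=
  ae_all_iff.2 fun _ => Measure.tendsto_eval_ae_ae.eventually (ae_pos_expMeasure one_pos)

lemma pi_expMeasure_pi_Ioi {ι : Type*} [Fintype ι] {y : ι → ℝ} (hy : ∀ i, 0 ≤ y i) :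
    Measure.pi (fun _ : ι => expMeasure 1) (Set.univ.pi fun i => Set.Ioi (y i))
      = ENNReal.ofReal (Real.exp (-∑ i, y i)) := by
  rw [Measure.pi_pi, ← Finset.sum_neg_distrib, Real.exp_sum,
    ENNReal.ofReal_prod_of_nonneg fun _ _ => (Real.exp_pos _).le]
  exact Finset.prod_congr rfl fun i _ => by rw [expMeasure_Ioi one_pos (hy i), one_mul]

lemma pi_expMeasure_setOf_forall_mul_lt {n : ℕ} (c : Fin (n + 1)) {a : Fin n → ℝ}
    (ha : ∀ j, 0 ≤ a j) :
    Measure.pi (fun _ => expMeasure 1)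
        {x : Fin (n + 1) → ℝ | ∀ j, a j * x c < x (c.succAbove j)}
      = ENNReal.ofReal (1 / (1 + ∑ j, a j)) := by
  set s : Set (ℝ × (Fin n → ℝ)) := {p | ∀ j, a j * p.1 < p.2 j}
  have hs : MeasurableSet s := by
    simp only [s, Set.ofPred_forall]
    exact .iInter fun j => measurableSet_lt (by fun_prop) (by fun_prop)
  have hslice : ∀ t, 0 ≤ t → Measure.pi (fun _ => expMeasure 1) (Prod.mk t ⁻¹' s)
      = ENNReal.ofReal (Real.exp (-((∑ j, a j) * t))) := by
    intro t ht
    rw [show Prod.mk t ⁻¹' s = Set.univ.pi fun j => Set.Ioi (a j * t) by ext; simp [s],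
      pi_expMeasure_pi_Ioi fun j => mul_nonneg (ha j) ht, Finset.sum_mul]
  rw [show {x : Fin (n + 1) → ℝ | ∀ j, a j * x c < x (c.succAbove j)}
      = MeasurableEquiv.piFinSuccAbove (fun _ => ℝ) c ⁻¹' s from rfl,
    (measurePreserving_piFinSuccAbove (fun _ => expMeasure 1) c).measure_preimage
      hs.nullMeasurableSet,
    Measure.prod_apply hs,
    lintegral_congr_ae ((ae_pos_expMeasure one_pos).mono fun t ht => hslice t ht.le),
    lintegral_exp_neg_mul_expMeasure one_pos
      (by positivity [Finset.sum_nonneg fun j (_ : j ∈ Finset.univ) => ha j])]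

lemma pi_expMeasure_setOf_isStrictArgmin_mul {C : ℕ} [NeZero C] {w : Fin C → ℝ}
    (hw : ∀ i, 0 < w i) (c : Fin C) :
    Measure.pi (fun _ => expMeasure 1) {x : Fin C → ℝ | IsStrictArgmin (fun i => x i * w i) c}
      = ENNReal.ofReal ((w c)⁻¹ / ∑ i, (w i)⁻¹) := by
  obtain ⟨n, rfl⟩ := Nat.exists_eq_succ_of_ne_zero (NeZero.ne C)
  have hset : {x : Fin (n + 1) → ℝ | IsStrictArgmin (fun i => x i * w i) c}
      = {x | ∀ j, w c / w (c.succAbove j) * x c < x (c.succAbove j)} := by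
    ext x
    simp only [Set.mem_ofPred_eq, IsStrictArgmin, Fin.forall_iff_succAbove c, ne_eq,
      not_true_eq_false, IsEmpty.forall_iff, true_and, Fin.succAbove_ne, not_false_eq_true,
      forall_const]
    refine forall_congr' fun j => ?_
    rw [div_mul_eq_mul_div, div_lt_iff₀ (hw _), mul_comm (w c)]
  have hsum : 1 + ∑ j, w c / w (c.succAbove j) = w c * ∑ i, (w i)⁻¹ := by
    simp only [Fin.sum_univ_succAbove _ c, mul_add, mul_inv_cancel₀ (hw c).ne', Finset.mul_sum,
      div_eq_mul_inv]
  rw [hset, pi_expMeasure_setOf_forall_mul_lt c fun j => (div_pos (hw c) (hw _)).le, hsum,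
    one_div, mul_inv, div_eq_mul_inv]

instance (C : ℕ) : IsProbabilityMeasure (dirichletOne C) :=
  Measure.isProbabilityMeasure_map (by fun_prop)

lemma dirichletOne_apply_of_div_mem_iff {C : ℕ} [NeZero C] {S : Set (Fin C → ℝ)}
    (hS : MeasurableSet S)
    (hscale : ∀ (x : Fin C → ℝ) (s : ℝ), 0 < s → ((fun i => x i / s) ∈ S ↔ x ∈ S)) :
    dirichletOne C S = Measure.pi (fun _ => expMeasure 1) S := by
  rw [dirichletOne, Measure.map_apply (by fun_prop) hS]
  refine measure_congr ?_
  filter_upwards [ae_forall_pos_pi_expMeasure] with x hx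
  exact propext (hscale x _ (Finset.sum_pos (fun i _ => hx i) Finset.univ_nonempty))

section Softmax

variable {C : ℕ}

lemma softmax_nonneg (φ : Fin C → ℝ) (c : Fin C) : 0 ≤ softmax φ c := by
  unfold softmax; positivity

lemma sum_softmax [NeZero C] (φ : Fin C → ℝ) : ∑ c, softmax φ c = 1 := by
  unfold softmax
  rw [← Finset.sum_div, div_self]
  exact (Finset.sum_pos (fun i _ => Real.exp_pos (φ i)) Finset.univ_nonempty).ne'

lemma softmax_eq_inv_div_sum_inv (φ : Fin C → ℝ) (c : Fin C) :
    softmax φ c = (Real.exp (-φ c))⁻¹ / ∑ i, (Real.exp (-φ i))⁻¹ := by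
  simp only [softmax, Real.exp_neg, inv_inv]

end Softmax

theorem stmt4 {C : ℕ} [NeZero C] (φ f : Fin C → ℝ) :
    ∫ π, f (argminF (fun i => π i * Real.exp (-φ i))) ∂(dirichletOne C)
      = ∑ i, f i * softmax φ i := by
  set S : Fin C → Set (Fin C → ℝ) :=
    fun c => {π | IsStrictArgmin (fun i => π i * Real.exp (-φ i)) c}
  have hS : ∀ c, MeasurableSet (S c) :=
    measurableSet_setOf_isStrictArgmin fun i => (measurable_pi_apply i).mul_const _
  have hdisj : Pairwise (Disjoint on S) := pairwise_disjoint_setOf_isStrictArgmin _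
  have hprob : ∀ c, dirichletOne C (S c) = ENNReal.ofReal (softmax φ c) := fun c => by
    rw [dirichletOne_apply_of_div_mem_iff (hS c) fun x s hs =>
      isStrictArgmin_div_mul_iff (x := x) (w := fun i => Real.exp (-φ i)) hs,
      pi_expMeasure_setOf_isStrictArgmin_mul (fun i => Real.exp_pos _),
      softmax_eq_inv_div_sum_inv]
  have hcover : ∀ᵐ π ∂dirichletOne C, π ∈ ⋃ c, S c := by
    refine ae_mem_iUnion_of_sum_measure_eq_one hS hdisj ?_
    rw [Finset.sum_congr rfl fun c _ => hprob c,
      ← ENNReal.ofReal_sum_of_nonneg fun c _ => softmax_nonneg φ c, sum_softmax,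
      ENNReal.ofReal_one]
  rw [integral_eq_sum_of_eqOn hS hdisj hcover
    fun c π hπ => congrArg f (argminF_eq_of_isStrictArgmin hπ)]
  refine Finset.sum_congr rfl fun c _ => ?_
  rw [measureReal_def, hprob c, ENNReal.toReal_ofReal (softmax_nonneg φ c), mul_comm]
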